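/- Let V be a finite-dimensional real inner product space with commuting orthogonal linear involutions σ and θ, and let A : V → V be a self-adjoint positive-definite invertible linear operator satisfying σ ∘ A = A⁻¹ ∘ σ and θ ∘ A = A⁻¹ ∘ θ. With q = ker(σ+id), k = ker(θ-id), p = ker(θ+id), h = ker(σ-id), one has the direct sum decomposition V = q ⊕ (k ∩ h) ⊕ A(p ∩ h). -/

import Mathlib

/-!
Write `q, k, p, h` for the eigenspaces in the statement. For `A = 1` the claim is the
simultaneous eigenspace decomposition `V = q ⊕ (k ∩ h) ⊕ (p ∩ h)` of the commuting involutions,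
given by explicit projections; in general it therefore suffices, by counting dimensions, that
`q + (k ∩ h) + A(p ∩ h)` is direct. If `x + y + A u = 0`, applying `1 + σ` gives
`2y + (A + A⁻¹) u = 0`, since `σ A u = A⁻¹ σ u = A⁻¹ u`; applying `θ` flips the sign of the
second summand. Hence `y = 0` and `(A + A⁻¹) u = 0`, and positivity of `A` and `A⁻¹` forces `u = 0`.
-/

open Module
open LinearMap (ker)

theorem LinearEquiv.apply_symm_of_apply_eq_symm_apply {K V : Type*} [Field K] [AddCommGroup V]
    [Module K V] {τ : V →ₗ[K] V} {A : V ≃ₗ[K] V} (h : ∀ v, τ (A v) = A.symm (τ v)) (v : V) :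
    τ (A.symm v) = A (τ v) := by
  rw [A.eq_symm_apply.mp (by simpa using h (A.symm v))]

theorem LinearEquiv.eq_zero_of_apply_add_symm_apply_eq_zero {V : Type*} [NormedAddCommGroup V]
    [InnerProductSpace ℝ V] {A : V ≃ₗ[ℝ] V} (hA : ∀ x : V, x ≠ 0 → (0 : ℝ) < inner ℝ (A x) x)
    {u : V} (h : A u + A.symm u = 0) : u = 0 := by
  by_contra hu
  have hsymm : (0 : ℝ) < inner ℝ (A.symm u) u := by
    simpa [real_inner_comm] using hA (A.symm u) (by simpa using hu)
  have := congr(inner ℝ $h u)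
  rw [inner_add_left, inner_zero_left] at this
  linarith [hA u hu]

section SumMap

variable {K V : Type*} [Field K] [AddCommGroup V] [Module K V]

def sumMap (U₁ U₂ U₃ : Submodule K V) : U₁ × U₂ × U₃ →ₗ[K] V :=
  U₁.subtype.coprod (U₂.subtype.coprod U₃.subtype)

@[simp]
theorem sumMap_apply (U₁ U₂ U₃ : Submodule K V) (w : U₁ × U₂ × U₃) :
    sumMap U₁ U₂ U₃ w = (w.1 : V) + w.2.1 + w.2.2 := by
  simp [sumMap, add_assoc]

theorem sumMap_bijective_of_injective_of_surjective [FiniteDimensional K V]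
    {U₁ U₂ U₃ W : Submodule K V} (hW : finrank K W = finrank K U₃)
    (hinj : Function.Injective (sumMap U₁ U₂ W))
    (hsurj : Function.Surjective (sumMap U₁ U₂ U₃)) :
    Function.Bijective (sumMap U₁ U₂ W) := by
  have hle := LinearMap.finrank_le_finrank_of_surjective hsurj
  have hge := LinearMap.finrank_le_finrank_of_injective hinj
  simp only [finrank_prod, hW] at hle hge
  refine ⟨hinj, (LinearMap.injective_iff_surjective_of_finrank_eq_finrank ?_).mp hinj⟩
  rw [finrank_prod, finrank_prod, hW]
  omega

end SumMap

section Involutions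

variable {K V : Type*} [Field K] [AddCommGroup V] [Module K V] {σ θ : V →ₗ[K] V}

theorem mem_ker_add_id_iff {x : V} : x ∈ ker (σ + LinearMap.id) ↔ σ x = -x := by
  simp [add_eq_zero_iff_eq_neg]

theorem mem_ker_sub_id_iff {x : V} : x ∈ ker (σ - LinearMap.id) ↔ σ x = x := by
  simp [sub_eq_zero]

variable [CharZero K]

theorem sumMap_eigenspaces_surjective (hσ : σ ∘ₗ σ = LinearMap.id) (hθ : θ ∘ₗ θ = LinearMap.id)
    (hcomm : σ ∘ₗ θ = θ ∘ₗ σ) :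
    Function.Surjective (sumMap (ker (σ + LinearMap.id))
      (ker (θ - LinearMap.id) ⊓ ker (σ - LinearMap.id))
      (ker (θ + LinearMap.id) ⊓ ker (σ - LinearMap.id))) := by
  have hσσ (v : V) : σ (σ v) = v := congr($hσ v)
  have hθθ (v : V) : θ (θ v) = v := congr($hθ v)
  have hσθ (v : V) : σ (θ v) = θ (σ v) := congr($hcomm v)
  intro v
  refine ⟨⟨⟨(2⁻¹ : K) • (v - σ v), ?_⟩, ⟨(4⁻¹ : K) • (v + σ v + θ v + θ (σ v)), ?_, ?_⟩,
    ⟨(4⁻¹ : K) • (v + σ v - θ v - θ (σ v)), ?_, ?_⟩⟩, ?_⟩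
  all_goals simp only [SetLike.mem_coe, mem_ker_add_id_iff, mem_ker_sub_id_iff, sumMap_apply,
    map_smul, map_add, map_sub, hσσ, hθθ, hσθ]
  all_goals module

theorem sumMap_eigenspaces_map_injective {A : V ≃ₗ[K] V} (hσA : ∀ v, σ (A v) = A.symm (σ v))
    (hθA : ∀ v, θ (A v) = A.symm (θ v)) (hA : ∀ u, A u + A.symm u = 0 → u = 0) :
    Function.Injective (sumMap (ker (σ + LinearMap.id))
      (ker (θ - LinearMap.id) ⊓ ker (σ - LinearMap.id))
      ((ker (θ + LinearMap.id) ⊓ ker (σ - LinearMap.id)).map (A : V →ₗ[K] V))) := by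
  rw [← LinearMap.ker_eq_bot, LinearMap.ker_eq_bot']
  rintro ⟨⟨x, hx⟩, ⟨y, hyθ, hyσ⟩, ⟨z, u, ⟨huθ, huσ⟩, rfl⟩⟩ hsum
  simp only [sumMap_apply, LinearEquiv.coe_coe] at hsum
  simp only [SetLike.mem_coe, mem_ker_add_id_iff, mem_ker_sub_id_iff] at hx hyθ hyσ huθ huσ
  have hσsum : -x + y + A.symm u = 0 := by
    simpa only [map_add, map_zero, hx, hyσ, hσA, huσ] using congr(σ $hsum)
  have hfix : (2 : K) • y + (A u + A.symm u) = 0 := by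
    linear_combination (norm := module) hsum + hσsum
  have hanti : (2 : K) • y - (A u + A.symm u) = 0 := by
    have := congr(θ $hfix)
    simp only [map_add, map_smul, map_zero, hyθ, hθA, huθ, map_neg,
      LinearEquiv.apply_symm_of_apply_eq_symm_apply hθA] at this
    linear_combination (norm := module) this
  have hy0 : y = 0 := by
    have : (4 : K) • y = 0 := by linear_combination (norm := module) hfix + hanti
    simpa using this
  have hu0 : u = 0 := hA u (by simpa [hy0] using hfix)
  have hx0 : x = 0 := by simpa [hy0, hu0] using hsum
  ext <;> simp [hx0, hy0, hu0]

end Involutions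

theorem stmt_7_general {V : Type*} [NormedAddCommGroup V] [InnerProductSpace ℝ V]
    [FiniteDimensional ℝ V]
    (σ θ : V →ₗ[ℝ] V) (hσ : σ ∘ₗ σ = LinearMap.id) (hθ : θ ∘ₗ θ = LinearMap.id)
    (hcomm : σ ∘ₗ θ = θ ∘ₗ σ)
    (A : V ≃ₗ[ℝ] V)
    (hApd : ∀ x : V, x ≠ 0 → (0 : ℝ) < inner ℝ (A x) x)
    (hσA : ∀ v : V, σ (A v) = A.symm (σ v))
    (hθA : ∀ v : V, θ (A v) = A.symm (θ v)) :
    ∀ v : V, ∃! w : (LinearMap.ker (σ + LinearMap.id)) ×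
        (LinearMap.ker (θ - LinearMap.id) ⊓ LinearMap.ker (σ - LinearMap.id) :
          Submodule ℝ V) ×
        (Submodule.map (A : V →ₗ[ℝ] V)
          (LinearMap.ker (θ + LinearMap.id) ⊓ LinearMap.ker (σ - LinearMap.id)) :
          Submodule ℝ V),
      v = (w.1 : V) + (w.2.1 : V) + (w.2.2 : V) := by
  have hbij := sumMap_bijective_of_injective_of_surjective (A.finrank_map_eq _)
    (sumMap_eigenspaces_map_injective hσA hθA
      fun _ => A.eq_zero_of_apply_add_symm_apply_eq_zero hApd)
    (sumMap_eigenspaces_surjective hσ hθ hcomm)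
  intro v
  simpa [eq_comm] using (Function.bijective_iff_existsUnique _).mp hbij v

theorem stmt_7 {V : Type*} [NormedAddCommGroup V] [InnerProductSpace ℝ V]
    [FiniteDimensional ℝ V]
    (σ θ : V →ₗ[ℝ] V) (hσ : σ ∘ₗ σ = LinearMap.id) (hθ : θ ∘ₗ θ = LinearMap.id)
    (hcomm : σ ∘ₗ θ = θ ∘ₗ σ)
    (hσorth : ∀ x y : V, (inner ℝ (σ x) (σ y) : ℝ) = inner ℝ x y)
    (hθorth : ∀ x y : V, (inner ℝ (θ x) (θ y) : ℝ) = inner ℝ x y)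
    (A : V ≃ₗ[ℝ] V)
    (hAsa : ∀ x y : V, (inner ℝ (A x) y : ℝ) = inner ℝ x (A y))
    (hApd : ∀ x : V, x ≠ 0 → (0 : ℝ) < inner ℝ (A x) x)
    (hσA : ∀ v : V, σ (A v) = A.symm (σ v))
    (hθA : ∀ v : V, θ (A v) = A.symm (θ v)) :
    ∀ v : V, ∃! w : (LinearMap.ker (σ + LinearMap.id)) ×
        (LinearMap.ker (θ - LinearMap.id) ⊓ LinearMap.ker (σ - LinearMap.id) :
          Submodule ℝ V) ×
        (Submodule.map (A : V →ₗ[ℝ] V)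
          (LinearMap.ker (θ + LinearMap.id) ⊓ LinearMap.ker (σ - LinearMap.id)) :
          Submodule ℝ V),
      v = (w.1 : V) + (w.2.1 : V) + (w.2.2 : V) :=
  stmt_7_general σ θ hσ hθ hcomm A hApd hσA hθA
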